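/- arXiv:2102.10312 — 4 statements merged into one kernel-verified Lean document; each statement's English description precedes it below -/
import Mathlib

section
/- Let h be a Legendre kernel on ℝⁿ and ψ : ℝⁿ → ℝ∪{∞} proper, lsc, and lower bounded on the closure of dom h. For x ∈ int dom h and any x̄ ∈ argmin_z {ψ(z) + D_h(z,x)}, if ψ is convex then for every y ∈ dom h: ψ(x̄) + D_h(x̄,x) ≤ ψ(y) + D_h(y,x) - D_h(y,x̄). -/
open Set Filter Topology

noncomputable def bregman {H : Type*} [NormedAddCommGroup H] [InnerProductSpace ℝ H]
    [CompleteSpace H] (h : H → ℝ) (x y : H) : ℝ :=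
  h x - h y - (inner ℝ (gradient h y) (x - y) : ℝ)

/-- `h` (extended by `+∞` outside `dom`) is a Legendre kernel: proper, lsc,
strictly convex, `C¹` on the (nonempty) interior of its domain, 1-coercive, and
essentially smooth. -/
def IsLegendreOn {H : Type*} [NormedAddCommGroup H] [InnerProductSpace ℝ H]
    [CompleteSpace H] (h : H → ℝ) (dom : Set H) : Prop :=
  (interior dom).Nonempty ∧
  LowerSemicontinuousOn h dom ∧
  StrictConvexOn ℝ dom h ∧
  ContDiffOn ℝ 1 h (interior dom) ∧
  -- 1-coercivity: h(x)/‖x‖ → ∞ as ‖x‖ → ∞ within dom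
  (∀ M : ℝ, ∃ R : ℝ, ∀ x ∈ dom, R ≤ ‖x‖ → M * ‖x‖ ≤ h x) ∧
  -- essential smoothness
  (∀ (x : ℕ → H) (x₀ : H), (∀ k, x k ∈ interior dom) →
    Tendsto x atTop (nhds x₀) → x₀ ∈ frontier dom →
    Tendsto (fun k => ‖gradient h (x k)‖) atTop atTop)

/-- `f` is `L`-smooth relative to `h` on `dom`: `L·h - f` and `L·h + f` are
convex on the interior of `dom`. -/
def RelSmooth {H : Type*} [NormedAddCommGroup H] [InnerProductSpace ℝ H]
    [CompleteSpace H] (f h : H → ℝ) (L : ℝ) (dom : Set H) : Prop :=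
  ConvexOn ℝ (interior dom) (fun x => L * h x - f x) ∧
  ConvexOn ℝ (interior dom) (fun x => L * h x + f x)

/-- Convexity of an extended-real-valued function. -/
def ERealConvex {H : Type*} [NormedAddCommGroup H] [InnerProductSpace ℝ H]
    (q : H → EReal) : Prop :=
  ∀ x y : H, ∀ a b : ℝ, 0 ≤ a → 0 ≤ b → a + b = 1 →
    q (a • x + b • y) ≤ (a : EReal) * q x + (b : EReal) * q y

/-! Along the segment `t ↦ x̄ + t • (y - x̄)`, convexity bounds `ψ + D_h(·, x)` above by
`g t = (1 - t) ψ(x̄) + t ψ(y) + D_h(x̄ + t • (y - x̄), x)`, and the bound is exact at `t = 0`.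
Since `x̄` minimizes `ψ + D_h(·, x)`, `g` is minimized on `[0, 1]` at `0`, so
`g'(0) = ψ(y) - ψ(x̄) + ⟪∇h(x̄) - ∇h(x), y - x̄⟫ ≥ 0`. The three-point identity
`D_h(y, x) - D_h(y, x̄) - D_h(x̄, x) = ⟪∇h(x̄) - ∇h(x), y - x̄⟫` turns this into the claim.
When `ψ(y) = ⊤` or `ψ(x̄) = ⊥` the claim is trivial, and otherwise both values are finite. -/
theorem nonneg_of_hasDerivAt_of_forall_Icc_le {g : ℝ → ℝ} {g' : ℝ} (hg : HasDerivAt g g' 0)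
    (hmin : ∀ t ∈ Icc (0 : ℝ) 1, g 0 ≤ g t) : 0 ≤ g' := by
  have hcone : (1 : ℝ) ∈ posTangentConeAt (Icc (0 : ℝ) 1) 0 :=
    mem_posTangentConeAt_of_segment_subset (by simp [segment_eq_Icc])
  simpa using (isMinOn_iff.mpr hmin).localize.hasFDerivWithinAt_nonneg
    hg.hasDerivWithinAt.hasFDerivWithinAt hcone

theorem ERealConvex.le_add_smul_sub {H : Type*} [NormedAddCommGroup H] [InnerProductSpace ℝ H]
    {ψ : H → EReal} (hψ : ERealConvex ψ) {x y : H} {a b : ℝ} (hx : ψ x = a) (hy : ψ y = b)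
    {t : ℝ} (ht : t ∈ Icc (0 : ℝ) 1) :
    ψ (x + t • (y - x)) ≤ ((1 - t) * a + t * b : ℝ) := by
  have hseg : x + t • (y - x) = (1 - t) • x + t • y := by module
  have := hψ x y (1 - t) t (sub_nonneg.mpr ht.2) ht.1 (by ring)
  rwa [← hseg, hx, hy, ← EReal.coe_mul, ← EReal.coe_mul, ← EReal.coe_add] at this

section Bregman

variable {H : Type*} [NormedAddCommGroup H] [InnerProductSpace ℝ H] [CompleteSpace H]

theorem bregman_three_point (h : H → ℝ) (x x' y : H) :
    bregman h y x - bregman h y x' - bregman h x' x =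
      inner ℝ (gradient h x' - gradient h x) (y - x') := by
  simp only [bregman, inner_sub_left, inner_sub_right]
  ring

theorem hasDerivAt_bregman_add_smul {h : H → ℝ} {z : H} (hz : DifferentiableAt ℝ h z)
    (x v : H) :
    HasDerivAt (fun t : ℝ => bregman h (z + t • v) x)
      (inner ℝ (gradient h z - gradient h x) v) 0 := by
  have hline : HasDerivAt (fun t : ℝ => z + t • v) v 0 := by
    simpa using ((hasDerivAt_id (0 : ℝ)).smul_const v).const_add z
  have hh : HasDerivAt (fun t : ℝ => h (z + t • v)) (inner ℝ (gradient h z) v) 0 := by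
    have hzt : HasFDerivAt h (InnerProductSpace.toDual ℝ H (gradient h z)) (z + (0 : ℝ) • v) := by
      simpa using hasGradientAt_iff_hasFDerivAt.mp hz.hasGradientAt
    exact (hzt.comp_hasDerivAt 0 hline).congr_deriv (InnerProductSpace.toDual_apply_apply ..)
  have hlin : HasDerivAt (fun t : ℝ => inner ℝ (gradient h x) (z + t • v - x))
      (inner ℝ (gradient h x) v) 0 :=
    ((innerSL ℝ (gradient h x)).hasFDerivAt.comp_hasDerivAt 0 (hline.sub_const x)).congr_deriv
      (by simp)
  exact ((hh.sub_const (h x)).sub hlin).congr_deriv (inner_sub_left ..).symm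

theorem bregman_prox_le_of_eq_coe {h : H → ℝ} {ψ : H → EReal} (hψ : ERealConvex ψ) {x x' y : H}
    (hd : DifferentiableAt ℝ h x')
    (hmin : ∀ z, ψ x' + (bregman h x' x : EReal) ≤ ψ z + (bregman h z x : EReal))
    {a r : ℝ} (ha : ψ x' = a) (hr : ψ y = r) :
    a + bregman h x' x ≤ r + bregman h y x - bregman h y x' := by
  set v := y - x'
  have hopt : 0 ≤ r - a + inner ℝ (gradient h x' - gradient h x) v := by
    refine nonneg_of_hasDerivAt_of_forall_Icc_le
      ((hasDerivAt_mul_const (r - a)).add (hasDerivAt_bregman_add_smul hd x v)) fun t ht => ?_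
    have hz := (hmin (x' + t • v)).trans (add_le_add_left (hψ.le_add_smul_sub ha hr ht) _)
    rw [ha, ← EReal.coe_add, ← EReal.coe_add, EReal.coe_le_coe_iff] at hz
    simp only [Pi.add_apply, zero_mul, zero_smul, add_zero, zero_add]
    linarith
  linarith [bregman_three_point h x x' y]

theorem bregman_prox_le {h : H → ℝ} {ψ : H → EReal} (hψ : ERealConvex ψ) {x x' : H}
    (hd : DifferentiableAt ℝ h x')
    (hmin : ∀ z, ψ x' + (bregman h x' x : EReal) ≤ ψ z + (bregman h z x : EReal)) (y : H) :
    ψ x' + (bregman h x' x : EReal) ≤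
      ψ y + (bregman h y x : EReal) - (bregman h y x' : EReal) := by
  rcases eq_top_or_lt_top (ψ y) with hy_top | hy_top
  · simp [hy_top]
  rcases eq_bot_or_bot_lt (ψ x') with hx_bot | hx_bot
  · simp [hx_bot]
  have hy := hmin y
  have hx_top : ψ x' ≠ ⊤ := fun htop => by
    simp only [htop, EReal.top_add_coe, top_le_iff] at hy
    exact (EReal.add_lt_top hy_top.ne (EReal.coe_ne_top _)).ne hy
  have hy_bot : ψ y ≠ ⊥ := fun hbot => by
    simp only [hbot, EReal.bot_add, le_bot_iff, EReal.add_eq_bot_iff, EReal.coe_ne_bot,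
      or_false] at hy
    exact hx_bot.ne' hy
  rw [← EReal.coe_toReal hx_top hx_bot.ne', ← EReal.coe_toReal hy_top.ne hy_bot]
  exact_mod_cast bregman_prox_le_of_eq_coe hψ hd hmin (EReal.coe_toReal hx_top hx_bot.ne').symm
    (EReal.coe_toReal hy_top.ne hy_bot).symm

end Bregman

theorem bregman_prox_convex_inequality_general {n : ℕ}
    (h : EuclideanSpace ℝ (Fin n) → ℝ) (dom : Set (EuclideanSpace ℝ (Fin n)))
    (hleg : IsLegendreOn h dom)
    (ψ : EuclideanSpace ℝ (Fin n) → EReal)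
    (hψconv : ERealConvex ψ)
    (x : EuclideanSpace ℝ (Fin n))
    (xbar : EuclideanSpace ℝ (Fin n)) (hxbar : xbar ∈ interior dom)
    (hargmin : ∀ z, ψ xbar + (bregman h xbar x : EReal) ≤ ψ z + (bregman h z x : EReal))
    (y : EuclideanSpace ℝ (Fin n)) :
    ψ xbar + (bregman h xbar x : EReal) ≤
      ψ y + (bregman h y x : EReal) - (bregman h y xbar : EReal) := by
  obtain ⟨-, -, -, hC1, -⟩ := hleg
  have hd : DifferentiableAt ℝ h xbar :=
    (hC1.contDiffAt (isOpen_interior.mem_nhds hxbar)).differentiableAt one_ne_zero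
  exact bregman_prox_le hψconv hd hargmin y

/-- For convex `ψ`, the Bregman proximal point `x̄` of `x` satisfies
`ψ(x̄) + D_h(x̄,x) ≤ ψ(y) + D_h(y,x) - D_h(y,x̄)` for every `y ∈ dom h`. -/
theorem bregman_prox_convex_inequality {n : ℕ}
    (h : EuclideanSpace ℝ (Fin n) → ℝ) (dom : Set (EuclideanSpace ℝ (Fin n)))
    (hleg : IsLegendreOn h dom)
    (ψ : EuclideanSpace ℝ (Fin n) → EReal)
    (hψproper : (∃ x, ψ x ≠ ⊤) ∧ ∀ x, ψ x ≠ ⊥)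
    (hψlsc : LowerSemicontinuous ψ)
    (hψlb : ∃ m : ℝ, ∀ z ∈ closure dom, (m : EReal) ≤ ψ z)
    (hψconv : ERealConvex ψ)
    (x : EuclideanSpace ℝ (Fin n)) (hx : x ∈ interior dom)
    (xbar : EuclideanSpace ℝ (Fin n)) (hxbar : xbar ∈ interior dom)
    (hargmin : ∀ z, ψ xbar + (bregman h xbar x : EReal) ≤ ψ z + (bregman h z x : EReal))
    (y : EuclideanSpace ℝ (Fin n)) (hy : y ∈ dom) :
    ψ xbar + (bregman h xbar x : EReal) ≤
      ψ y + (bregman h y x : EReal) - (bregman h y xbar : EReal) :=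
  bregman_prox_convex_inequality_general h dom hleg ψ hψconv x xbar hxbar hargmin y
end

section
/- Let (α_k) ⊂ [0,∞) be a sequence and suppose there exist c > 0 and δ ∈ (1,∞) such that α_{k+1}^δ ≤ c(α_k - α_{k+1}) for every k ∈ ℕ. Then there exists c' > 0 such that α_k ≤ c'·k^{-1/(δ-1)} for all k ≥ 1. -/
/-!
Write `γ = δ - 1`; the point is that `α k ^ (-γ)` grows at least linearly while `α k > 0`.
If `α (k+1) ≥ α k / 2`, the tangent-line bound for the convex map `t ↦ t ^ (-γ)` (Bernoulli's
inequality) together with the decrease condition gives an increment of at least `γ / (2 ^ δ c)`;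
otherwise `α (k+1) ^ (-γ) ≥ 2 ^ γ α k ^ (-γ)`, and `α k ^ (-γ)` stays above
`(max (α 0) 1) ^ (-γ)` because `α` decreases while positive. Inverting `μ k ≤ α k ^ (-γ)` gives
the rate.
-/

open Real

lemma sub_mul_rpow_neg_le_rpow_neg_sub {a b δ : ℝ} (hδ : 1 ≤ δ) (ha : 0 < a) (hb : 0 < b) :
    (δ - 1) * (a - b) * a ^ (-δ) ≤ b ^ (-(δ - 1)) - a ^ (-(δ - 1)) := by
  have hbern : 1 + δ * (a / b - 1) ≤ a ^ δ / b ^ δ := by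
    rw [← div_rpow ha.le hb.le]
    simpa using one_add_mul_self_le_rpow_one_add (by linarith [div_pos ha hb] : -1 ≤ a / b - 1) hδ
  have hA : 0 < a ^ δ := rpow_pos_of_pos ha δ
  have hB : 0 < b ^ δ := rpow_pos_of_pos hb δ
  rw [rpow_neg ha.le, neg_sub, rpow_sub ha, rpow_sub hb, rpow_one, rpow_one]
  rw [le_div_iff₀ hB] at hbern
  field_simp at hbern ⊢
  nlinarith

lemma rpow_neg_add_le_of_le_two_mul {a b c δ : ℝ} (hc : 0 < c) (hδ : 1 ≤ δ) (hb : 0 < b)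
    (hab : a ≤ 2 * b) (hdec : b ^ δ ≤ c * (a - b)) :
    a ^ (-(δ - 1)) + (δ - 1) / (2 ^ δ * c) ≤ b ^ (-(δ - 1)) := by
  have ha : 0 < a := by nlinarith [rpow_pos_of_pos hb δ]
  have hA : 0 < a ^ δ := rpow_pos_of_pos ha δ
  have hAc : a ^ δ ≤ 2 ^ δ * c * (a - b) := calc
    a ^ δ ≤ (2 * b) ^ δ := rpow_le_rpow ha.le hab (by linarith)
    _ = 2 ^ δ * b ^ δ := mul_rpow zero_le_two hb.le
    _ ≤ 2 ^ δ * c * (a - b) := by rw [mul_assoc]; gcongr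
  have hslope : (δ - 1) / (2 ^ δ * c) ≤ (δ - 1) * (a - b) * a ^ (-δ) := by
    rw [rpow_neg ha.le, ← div_eq_mul_inv, div_le_div_iff₀ (by positivity) hA]
    nlinarith
  linarith [hslope, sub_mul_rpow_neg_le_rpow_neg_sub hδ ha hb]

lemma rpow_neg_add_le_of_two_mul_le {a b γ M : ℝ} (hγ : 0 ≤ γ) (hb : 0 < b) (hab : 2 * b ≤ a)
    (haM : a ≤ M) :
    a ^ (-γ) + (2 ^ γ - 1) * M ^ (-γ) ≤ b ^ (-γ) := by
  have ha : 0 < a := by linarith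
  calc a ^ (-γ) + (2 ^ γ - 1) * M ^ (-γ)
      ≤ a ^ (-γ) + (2 ^ γ - 1) * a ^ (-γ) := by
        have h2γ : 1 ≤ (2 : ℝ) ^ γ := one_le_rpow one_le_two hγ
        have hMa : M ^ (-γ) ≤ a ^ (-γ) := rpow_le_rpow_of_nonpos ha haM (by linarith)
        nlinarith
    _ = (a / 2) ^ (-γ) := by
        rw [div_rpow ha.le zero_le_two, rpow_neg zero_le_two γ, div_inv_eq_mul]; ring
    _ ≤ b ^ (-γ) := rpow_le_rpow_of_nonpos hb (by linarith) (by linarith)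

lemma rpow_neg_add_min_le_of_pow_le_mul_sub {a b c δ M : ℝ} (hc : 0 < c) (hδ : 1 ≤ δ)
    (hb : 0 < b) (haM : a ≤ M) (hdec : b ^ δ ≤ c * (a - b)) :
    a ^ (-(δ - 1)) + min ((δ - 1) / (2 ^ δ * c)) ((2 ^ (δ - 1) - 1) * M ^ (-(δ - 1))) ≤
      b ^ (-(δ - 1)) := by
  rcases le_total a (2 * b) with hab | hab
  · linarith [min_le_left ((δ - 1) / (2 ^ δ * c)) ((2 ^ (δ - 1) - 1) * M ^ (-(δ - 1))),
      rpow_neg_add_le_of_le_two_mul hc hδ hb hab hdec]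
  · linarith [min_le_right ((δ - 1) / (2 ^ δ * c)) ((2 ^ (δ - 1) - 1) * M ^ (-(δ - 1))),
      rpow_neg_add_le_of_two_mul_le (sub_nonneg.2 hδ) hb hab haM]

lemma exists_pos_mul_le_rpow_neg_of_sufficient_decrease {α : ℕ → ℝ} {c δ : ℝ} (hc : 0 < c)
    (hδ : 1 < δ) (hdec : ∀ k, α (k + 1) ^ δ ≤ c * (α k - α (k + 1))) :
    ∃ μ > 0, ∀ k : ℕ, 0 < α k → μ * k ≤ α k ^ (-(δ - 1)) := by
  have hlt : ∀ k, 0 < α (k + 1) → α (k + 1) < α k := fun k hpos => by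
    nlinarith [hdec k, rpow_pos_of_pos hpos δ]
  set M := max (α 0) 1
  have hM : ∀ k, 0 < α k → α k ≤ M := by
    intro k
    induction k with
    | zero => exact fun _ => le_max_left _ _
    | succ k ih => exact fun hpos => (hlt k hpos).le.trans (ih (hpos.trans (hlt k hpos)))
  refine ⟨min ((δ - 1) / (2 ^ δ * c)) ((2 ^ (δ - 1) - 1) * M ^ (-(δ - 1))), ?_, ?_⟩
  · have h2 : 1 < (2 : ℝ) ^ (δ - 1) := one_lt_rpow one_lt_two (by linarith)
    have hM0 : 0 < M ^ (-(δ - 1)) := rpow_pos_of_pos (lt_max_of_lt_right one_pos) _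
    apply lt_min
    · apply div_pos (by linarith); positivity
    · nlinarith
  intro k
  induction k with
  | zero => exact fun hpos => by simpa using (rpow_pos_of_pos hpos _).le
  | succ k ih =>
    intro hpos
    have hk := hlt k hpos
    push_cast
    linarith [ih (hpos.trans hk), rpow_neg_add_min_le_of_pow_le_mul_sub hc hδ.le hpos
      (hM k (hpos.trans hk)) (hdec k)]

theorem sublinear_of_sufficient_decrease_general (α : ℕ → ℝ)
    (c δ : ℝ) (hc : 0 < c) (hδ : 1 < δ)
    (hdec : ∀ k, α (k + 1) ^ δ ≤ c * (α k - α (k + 1))) :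
    ∃ c' > 0, ∀ k : ℕ, 1 ≤ k → α k ≤ c' * (k : ℝ) ^ (-(1 / (δ - 1))) := by
  obtain ⟨μ, hμ, hμα⟩ := exists_pos_mul_le_rpow_neg_of_sufficient_decrease hc hδ hdec
  refine ⟨μ ^ (-(1 / (δ - 1))), rpow_pos_of_pos hμ _, fun k hk => ?_⟩
  have hk : (0 : ℝ) < k := by exact_mod_cast hk
  rcases le_or_gt (α k) 0 with hnonpos | hpos
  · exact hnonpos.trans (by positivity)
  · have hexp : (-(δ - 1))⁻¹ = -(1 / (δ - 1)) := by rw [inv_neg, one_div]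
    rw [← mul_rpow hμ.le hk.le, ← hexp, le_rpow_inv_iff_of_neg hpos (by positivity) (by linarith)]
    exact hμα k hpos

/-- If `α_{k+1}^δ ≤ c(α_k - α_{k+1})` with `δ > 1`, `c > 0` and `α_k ≥ 0`, then
`α_k ≤ c'·k^{-1/(δ-1)}` for all `k ≥ 1`, for some `c' > 0`. -/
theorem sublinear_of_sufficient_decrease (α : ℕ → ℝ) (hα : ∀ k, 0 ≤ α k)
    (c δ : ℝ) (hc : 0 < c) (hδ : 1 < δ)
    (hdec : ∀ k, α (k + 1) ^ δ ≤ c * (α k - α (k + 1))) :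
    ∃ c' > 0, ∀ k : ℕ, 1 ≤ k → α k ≤ c' * (k : ℝ) ^ (-(1 / (δ - 1))) :=
  sublinear_of_sufficient_decrease_general α c δ hc hδ hdec
end

section
/- Let a ∈ ℝⁿ and b ≥ 0, and define f(x) = (1/4)(⟨a,x⟩² - b)² and h(x) = (1/4)‖x‖⁴ + (1/2)‖x‖². Then f is L-smooth relative to h with L = 3‖a‖⁴ + ‖a‖²·b, i.e., both L·h - f and L·h + f are convex on ℝⁿ. -/
/-!
Convexity on a vector space can be tested on lines `t ↦ x + t • z`, and on `ℝ` it follows from a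
nonnegative second derivative. Along such a line, with `y = x + t • z`, the second derivative of
`h` is `2⟪y, z⟫² + (‖y‖² + 1)‖z‖²` and that of `f` is `(3⟪a, y⟫² - b)⟪a, z⟫²`, so the
Cauchy–Schwarz bounds `⟪a, y⟫² ≤ ‖a‖²‖y‖²` and `⟪a, z⟫² ≤ ‖a‖²‖z‖²` give `|f''| ≤ L h''`.
-/

open Set

open scoped RealInnerProductSpace

section RelativelySmooth

variable {V : Type*} [AddCommGroup V] [Module ℝ V]

def RelativelySmooth (L : ℝ) (f h : V → ℝ) : Prop :=
  ConvexOn ℝ univ (fun x => L * h x - f x) ∧ ConvexOn ℝ univ (fun x => L * h x + f x)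

theorem convexOn_univ_of_forall_convexOn_line {f : V → ℝ}
    (h : ∀ x z : V, ConvexOn ℝ univ fun t : ℝ => f (x + t • z)) : ConvexOn ℝ univ f := by
  refine ⟨convex_univ, fun x _ y _ α β hα hβ hαβ => ?_⟩
  convert (h x (y - x)).2 (mem_univ 0) (mem_univ 1) hα hβ hαβ using 2
  · rw [eq_sub_of_add_eq hαβ]
    module
  · simp
  · simp

theorem RelativelySmooth.of_forall_line {L : ℝ} {f h : V → ℝ}
    (H : ∀ x z : V, RelativelySmooth L (fun t : ℝ => f (x + t • z)) fun t => h (x + t • z)) :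
    RelativelySmooth L f h :=
  ⟨convexOn_univ_of_forall_convexOn_line fun x z => (H x z).1,
    convexOn_univ_of_forall_convexOn_line fun x z => (H x z).2⟩

end RelativelySmooth

theorem convexOn_univ_of_hasDerivAt2_nonneg {f f' f'' : ℝ → ℝ}
    (hf : ∀ t, HasDerivAt f (f' t) t) (hf' : ∀ t, HasDerivAt f' (f'' t) t)
    (hf'' : ∀ t, 0 ≤ f'' t) : ConvexOn ℝ univ f :=
  convexOn_of_hasDerivWithinAt2_nonneg convex_univ
    (continuous_iff_continuousAt.2 fun t => (hf t).continuousAt).continuousOn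
    (fun t _ => (hf t).hasDerivWithinAt) (fun t _ => (hf' t).hasDerivWithinAt) fun t _ => hf'' t

theorem relativelySmooth_of_abs_deriv2_le {L : ℝ} {f f' f'' h h' h'' : ℝ → ℝ}
    (hf : ∀ t, HasDerivAt f (f' t) t) (hf' : ∀ t, HasDerivAt f' (f'' t) t)
    (hh : ∀ t, HasDerivAt h (h' t) t) (hh' : ∀ t, HasDerivAt h' (h'' t) t)
    (hle : ∀ t, |f'' t| ≤ L * h'' t) : RelativelySmooth L f h :=
  ⟨convexOn_univ_of_hasDerivAt2_nonneg (fun t => ((hh t).const_mul L).sub (hf t))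
      (fun t => ((hh' t).const_mul L).sub (hf' t))
      fun t => sub_nonneg.2 ((le_abs_self _).trans (hle t)),
    convexOn_univ_of_hasDerivAt2_nonneg (fun t => ((hh t).const_mul L).add (hf t))
      (fun t => ((hh' t).const_mul L).add (hf' t))
      fun t => by linarith [neg_abs_le (f'' t), hle t]⟩

theorem real_inner_sq_le_norm_sq_mul_norm_sq {E : Type*} [NormedAddCommGroup E]
    [InnerProductSpace ℝ E] (x y : E) : ⟪x, y⟫ ^ 2 ≤ ‖x‖ ^ 2 * ‖y‖ ^ 2 := by
  rw [← mul_pow, ← sq_abs]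
  exact pow_le_pow_left₀ (abs_nonneg _) (abs_real_inner_le_norm x y) 2

variable {E : Type*} [NormedAddCommGroup E] [InnerProductSpace ℝ E]

noncomputable def quarticKernel (x : E) : ℝ := (1 / 4) * ‖x‖ ^ 4 + (1 / 2) * ‖x‖ ^ 2

noncomputable def phaseRetrievalLoss (a : E) (b : ℝ) (x : E) : ℝ :=
  (1 / 4) * (⟪a, x⟫ ^ 2 - b) ^ 2

section Line

variable (x z : E) (t : ℝ)

theorem hasDerivAt_line : HasDerivAt (fun t : ℝ => x + t • z) z t := by
  simpa using ((hasDerivAt_id t).smul_const z).const_add x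

theorem hasDerivAt_quarticKernel_line :
    HasDerivAt (fun t : ℝ => quarticKernel (x + t • z))
      ((‖x + t • z‖ ^ 2 + 1) * ⟪x + t • z, z⟫) t := by
  have hN := (hasDerivAt_line x z t).norm_sq
  have h := ((hN.fun_pow 2).const_mul (1 / 4)).fun_add (hN.const_mul (1 / 2))
  refine (h.congr_deriv (by push_cast; ring)).congr_of_eventuallyEq (.of_forall fun s => ?_)
  simp only [quarticKernel]
  ring

theorem hasDerivAt_quarticKernel_line_deriv :
    HasDerivAt (fun t : ℝ => (‖x + t • z‖ ^ 2 + 1) * ⟪x + t • z, z⟫)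
      (2 * ⟪x + t • z, z⟫ ^ 2 + (‖x + t • z‖ ^ 2 + 1) * ‖z‖ ^ 2) t := by
  have hy := hasDerivAt_line x z t
  have h := (hy.norm_sq.add_const 1).mul (hy.inner ℝ (hasDerivAt_const t z))
  rw [inner_zero_right, zero_add, real_inner_self_eq_norm_sq] at h
  exact h.congr_deriv (by ring)

variable (a : E) (b : ℝ)

theorem hasDerivAt_inner_line : HasDerivAt (fun t : ℝ => ⟪a, x + t • z⟫) ⟪a, z⟫ t := by
  simpa using (hasDerivAt_const t a).inner ℝ (hasDerivAt_line x z t)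

theorem hasDerivAt_phaseRetrievalLoss_line :
    HasDerivAt (fun t : ℝ => phaseRetrievalLoss a b (x + t • z))
      ((⟪a, x + t • z⟫ ^ 2 - b) * ⟪a, x + t • z⟫ * ⟪a, z⟫) t :=
  (((((hasDerivAt_inner_line x z t a).fun_pow 2).sub_const b).fun_pow 2).const_mul
    (1 / 4)).congr_deriv (by push_cast; ring)

theorem hasDerivAt_phaseRetrievalLoss_line_deriv :
    HasDerivAt (fun t : ℝ => (⟪a, x + t • z⟫ ^ 2 - b) * ⟪a, x + t • z⟫ * ⟪a, z⟫)
      ((3 * ⟪a, x + t • z⟫ ^ 2 - b) * ⟪a, z⟫ ^ 2) t := by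
  have hl := hasDerivAt_inner_line x z t a
  exact ((((hl.fun_pow 2).sub_const b).mul hl).mul_const ⟪a, z⟫).congr_deriv (by push_cast; ring)

end Line

theorem abs_phaseRetrievalLoss_hessian_le (a y z : E) {b : ℝ} (hb : 0 ≤ b) :
    |(3 * ⟪a, y⟫ ^ 2 - b) * ⟪a, z⟫ ^ 2| ≤
      (3 * ‖a‖ ^ 4 + ‖a‖ ^ 2 * b) * (2 * ⟪y, z⟫ ^ 2 + (‖y‖ ^ 2 + 1) * ‖z‖ ^ 2) := by
  have hay := real_inner_sq_le_norm_sq_mul_norm_sq a y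
  have haz := real_inner_sq_le_norm_sq_mul_norm_sq a z
  have hprod : ⟪a, y⟫ ^ 2 * ⟪a, z⟫ ^ 2 ≤ (‖a‖ ^ 2 * ‖y‖ ^ 2) * (‖a‖ ^ 2 * ‖z‖ ^ 2) :=
    mul_le_mul hay haz (by positivity) (by positivity)
  have hbaz : b * ⟪a, z⟫ ^ 2 ≤ b * (‖a‖ ^ 2 * ‖z‖ ^ 2) := mul_le_mul_of_nonneg_left haz hb
  have hsplit : 3 * (‖a‖ ^ 2 * ‖y‖ ^ 2 * (‖a‖ ^ 2 * ‖z‖ ^ 2)) + b * (‖a‖ ^ 2 * ‖z‖ ^ 2) ≤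
      (3 * ‖a‖ ^ 4 + ‖a‖ ^ 2 * b) * (2 * ⟪y, z⟫ ^ 2 + (‖y‖ ^ 2 + 1) * ‖z‖ ^ 2) := by
    rw [← sub_nonneg]
    have hdiff : (3 * ‖a‖ ^ 4 + ‖a‖ ^ 2 * b) * (2 * ⟪y, z⟫ ^ 2 + (‖y‖ ^ 2 + 1) * ‖z‖ ^ 2) -
        (3 * (‖a‖ ^ 2 * ‖y‖ ^ 2 * (‖a‖ ^ 2 * ‖z‖ ^ 2)) + b * (‖a‖ ^ 2 * ‖z‖ ^ 2)) =
        2 * (3 * ‖a‖ ^ 4 + ‖a‖ ^ 2 * b) * ⟪y, z⟫ ^ 2 + ‖a‖ ^ 2 * b * ‖y‖ ^ 2 * ‖z‖ ^ 2 +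
          3 * ‖a‖ ^ 4 * ‖z‖ ^ 2 := by ring
    rw [hdiff]
    positivity
  rw [abs_le]
  constructor <;> linarith [mul_nonneg hb (sq_nonneg ⟪a, z⟫),
    mul_nonneg (sq_nonneg ⟪a, y⟫) (sq_nonneg ⟪a, z⟫)]

theorem phaseRetrievalLoss_relativelySmooth (a : E) {b : ℝ} (hb : 0 ≤ b) :
    RelativelySmooth (3 * ‖a‖ ^ 4 + ‖a‖ ^ 2 * b) (phaseRetrievalLoss a b) quarticKernel :=
  .of_forall_line fun x z => relativelySmooth_of_abs_deriv2_le
    (hasDerivAt_phaseRetrievalLoss_line x z · a b)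
    (hasDerivAt_phaseRetrievalLoss_line_deriv x z · a b)
    (hasDerivAt_quarticKernel_line x z) (hasDerivAt_quarticKernel_line_deriv x z)
    fun t => abs_phaseRetrievalLoss_hessian_le a (x + t • z) z hb

/-- The quartic phase-retrieval loss `f(x) = (1/4)(⟨a,x⟩² - b)²` is
`L`-smooth relative to `h(x) = (1/4)‖x‖⁴ + (1/2)‖x‖²` with
`L = 3‖a‖⁴ + ‖a‖²·b`. -/
theorem phase_retrieval_relsmooth {n : ℕ}
    (a : EuclideanSpace ℝ (Fin n)) (b : ℝ) (hb : 0 ≤ b) :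
    ConvexOn ℝ univ (fun x : EuclideanSpace ℝ (Fin n) =>
      (3 * ‖a‖ ^ 4 + ‖a‖ ^ 2 * b) * ((1 / 4) * ‖x‖ ^ 4 + (1 / 2) * ‖x‖ ^ 2) -
        (1 / 4) * ((inner ℝ a x : ℝ) ^ 2 - b) ^ 2) ∧
    ConvexOn ℝ univ (fun x : EuclideanSpace ℝ (Fin n) =>
      (3 * ‖a‖ ^ 4 + ‖a‖ ^ 2 * b) * ((1 / 4) * ‖x‖ ^ 4 + (1 / 2) * ‖x‖ ^ 2) +
        (1 / 4) * ((inner ℝ a x : ℝ) ^ 2 - b) ^ 2) :=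
  phaseRetrievalLoss_relativelySmooth a hb
end

section
/- Let a ∈ ℝⁿ₊ \ {0} and b > 0, and on the open positive orthant define f(x) = -b·log(⟨a,x⟩²) + ⟨a,x⟩² and h(x) = ‖a‖²‖x‖² - 2b·∑_{j=1}^n log(x_j). Then ∇²h(x) - ∇²f(x) is positive semidefinite for every x with all coordinates strictly positive; that is, f is 1-smooth relative to h (h - f is convex on the positive orthant). -/
/-!
At `x` in the positive orthant, the Hessian quadratic form of `h - f` in the direction `v` is
`2 (‖a‖²‖v‖² - ⟪a, v⟫²) + 2b (∑ⱼ (vⱼ/xⱼ)² - ⟪a, v⟫² / ⟪a, x⟫²)`.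
The first bracket is nonnegative by Cauchy–Schwarz. For the second, write
`⟪a, v⟫ = ∑ⱼ (aⱼxⱼ)(vⱼ/xⱼ)` and combine Cauchy–Schwarz with `∑ⱼ (aⱼxⱼ)² ≤ ⟪a, x⟫²`, valid because
`a ≥ 0` and `x > 0`. Convexity of `h - f` then follows from the second-derivative test along
segments of the positive orthant.
-/

open Set
open scoped RealInnerProductSpace

section Gradient

variable {F : Type*} [NormedAddCommGroup F] [InnerProductSpace ℝ F] [CompleteSpace F]

theorem HasGradientAt.sub {f g : F → ℝ} {f' g' x : F} (hf : HasGradientAt f f' x)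
    (hg : HasGradientAt g g' x) : HasGradientAt (fun y => f y - g y) (f' - g') x := by
  rw [hasGradientAt_iff_hasFDerivAt, map_sub]
  exact hf.hasFDerivAt.sub hg.hasFDerivAt

theorem HasDerivAt.hasGradientAt_comp_inner {φ : ℝ → ℝ} {φ' : ℝ} {a y : F}
    (hφ : HasDerivAt φ φ' ⟪a, y⟫) : HasGradientAt (fun z => φ ⟪a, z⟫) (φ' • a) y := by
  rw [hasGradientAt_iff_hasFDerivAt]
  refine (hφ.comp_hasFDerivAt y (innerSL ℝ a).hasFDerivAt).congr_fderiv ?_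
  ext v
  simp

theorem convexOn_of_hasGradientAt_of_hasFDerivAt_nonneg {f : F → ℝ} {s : Set F}
    (hs : Convex ℝ s) {G : F → F} {H : F → F →L[ℝ] F}
    (hf : ∀ x ∈ s, HasGradientAt f (G x) x) (hG : ∀ x ∈ s, HasFDerivAt G (H x) x)
    (hH : ∀ x ∈ s, ∀ v, 0 ≤ ⟪v, H x v⟫) : ConvexOn ℝ s f := by
  refine ⟨hs, fun p hp q hq α β hα hβ hαβ => ?_⟩
  obtain ⟨c, hc_def⟩ : ∃ c : ℝ → F, c = fun t => q + t • (p - q) := ⟨_, rfl⟩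
  have hc : ∀ t ∈ Icc (0 : ℝ) 1, c t ∈ s := fun t ht => by
    convert hs hp hq ht.1 (sub_nonneg.2 ht.2) (add_sub_cancel t 1) using 1
    simp only [hc_def]
    module
  have hc' : ∀ t, HasDerivAt c (p - q) t := fun t => by
    simpa [hc_def] using ((hasDerivAt_id t).smul_const (p - q)).const_add q
  have hfc : ∀ t ∈ Icc (0 : ℝ) 1, HasDerivAt (fun t => f (c t)) ⟪p - q, G (c t)⟫ t :=
    fun t ht => by
      simpa [Function.comp_def, real_inner_comm] using
        (hf _ (hc t ht)).hasFDerivAt.comp_hasDerivAt t (hc' t)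
  have hGc : ∀ t ∈ Icc (0 : ℝ) 1,
      HasDerivAt (fun t => ⟪p - q, G (c t)⟫) ⟪p - q, H (c t) (p - q)⟫ t := fun t ht =>
    (innerSL ℝ (p - q)).hasFDerivAt.comp_hasDerivAt t ((hG _ (hc t ht)).comp_hasDerivAt t (hc' t))
  have hconv : ConvexOn ℝ (Icc 0 1) (fun t => f (c t)) :=
    convexOn_of_hasDerivWithinAt2_nonneg (convex_Icc 0 1)
      (fun t ht => (hfc t ht).continuousAt.continuousWithinAt)
      (fun t ht => (hfc t (interior_subset ht)).hasDerivWithinAt)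
      (fun t ht => (hGc t (interior_subset ht)).hasDerivWithinAt)
      (fun t ht => hH _ (hc t (interior_subset ht)) (p - q))
  have hcomb := hconv.2 (right_mem_Icc.2 zero_le_one) (left_mem_Icc.2 zero_le_one) hα hβ hαβ
  have hc1 : c 1 = p := by simp [hc_def]
  have hc0 : c 0 = q := by simp [hc_def]
  have hcα : c α = α • p + β • q := by
    rw [hc_def, eq_sub_of_add_eq' hαβ]
    module
  simpa [hc1, hc0, hcα] using hcomb

end Gradient

section PositiveOrthant

variable {ι : Type*}

theorem isOpen_setOf_forall_pos [Finite ι] : IsOpen {x : EuclideanSpace ℝ ι | ∀ i, 0 < x i} := by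
  simp only [ofPred_forall]
  exact isOpen_iInter_of_finite fun i =>
    isOpen_lt continuous_const (EuclideanSpace.proj (𝕜 := ℝ) i).continuous

theorem convex_setOf_forall_pos : Convex ℝ {x : EuclideanSpace ℝ ι | ∀ i, 0 < x i} := by
  simp only [ofPred_forall]
  exact convex_iInter fun i =>
    convex_halfSpace_gt (EuclideanSpace.proj (𝕜 := ℝ) i).toLinearMap.isLinear 0

theorem EuclideanSpace.hasFDerivAt_apply (y : EuclideanSpace ℝ ι) (j : ι) :
    HasFDerivAt (𝕜 := ℝ) (fun z : EuclideanSpace ℝ ι => z j) (EuclideanSpace.proj j) y :=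
  (EuclideanSpace.proj j : EuclideanSpace ℝ ι →L[ℝ] ℝ).hasFDerivAt

variable [Fintype ι] {a x : EuclideanSpace ℝ ι}

theorem inner_pos_of_nonneg_of_pos (ha : ∀ i, 0 ≤ a i) (ha0 : a ≠ 0) (hx : ∀ i, 0 < x i) :
    0 < ⟪a, x⟫ := by
  obtain ⟨i, hi⟩ : ∃ i, a i ≠ 0 := by
    by_contra! h
    exact ha0 (by ext i; simpa using h i)
  rw [PiLp.inner_apply]
  refine Finset.sum_pos' (fun j _ => mul_nonneg (hx j).le (ha j)) ⟨i, Finset.mem_univ i, ?_⟩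
  exact mul_pos (hx i) ((ha i).lt_of_ne' hi)

theorem sq_inner_le_sq_inner_mul_sum_sq_div (ha : ∀ i, 0 ≤ a i) (hx : ∀ i, 0 < x i)
    (v : EuclideanSpace ℝ ι) : ⟪a, v⟫ ^ 2 ≤ ⟪a, x⟫ ^ 2 * ∑ i, (v i / x i) ^ 2 := by
  have hv : ⟪a, v⟫ = ∑ i, (a i * x i) * (v i / x i) := by
    simp only [PiLp.inner_apply, RCLike.inner_apply, conj_trivial]
    refine Finset.sum_congr rfl fun i _ => ?_
    field_simp [(hx i).ne']
  have hx' : ⟪a, x⟫ = ∑ i, a i * x i := by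
    simp [PiLp.inner_apply, mul_comm]
  calc ⟪a, v⟫ ^ 2 ≤ (∑ i, (a i * x i) ^ 2) * ∑ i, (v i / x i) ^ 2 :=
        hv ▸ Finset.sum_mul_sq_le_sq_mul_sq _ _ _
    _ ≤ ⟪a, x⟫ ^ 2 * ∑ i, (v i / x i) ^ 2 := by
        rw [hx']
        gcongr
        exact Finset.sum_sq_le_sq_sum_of_nonneg fun i _ => mul_nonneg (ha i) (hx i).le

end PositiveOrthant

noncomputable section Poisson

variable {ι : Type*} [Fintype ι]

section Definitions

variable (a : EuclideanSpace ℝ ι) (b : ℝ)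

def poissonLoss (y : EuclideanSpace ℝ ι) : ℝ :=
  -(b * Real.log (⟪a, y⟫ ^ 2)) + ⟪a, y⟫ ^ 2

def poissonLossGrad (y : EuclideanSpace ℝ ι) : EuclideanSpace ℝ ι :=
  (2 * ⟪a, y⟫ - 2 * b / ⟪a, y⟫) • a

def poissonLossHess (x : EuclideanSpace ℝ ι) : EuclideanSpace ℝ ι →L[ℝ] EuclideanSpace ℝ ι :=
  ((2 + 2 * b / ⟪a, x⟫ ^ 2) • innerSL ℝ a).smulRight a

def poissonReference (y : EuclideanSpace ℝ ι) : ℝ :=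
  ‖a‖ ^ 2 * ‖y‖ ^ 2 - 2 * b * ∑ j, Real.log (y j)

variable [DecidableEq ι]

def poissonReferenceGrad (y : EuclideanSpace ℝ ι) : EuclideanSpace ℝ ι :=
  (2 * ‖a‖ ^ 2) • y - (2 * b) • ∑ j, (y j)⁻¹ • EuclideanSpace.single j (1 : ℝ)

def poissonReferenceHess (x : EuclideanSpace ℝ ι) :
    EuclideanSpace ℝ ι →L[ℝ] EuclideanSpace ℝ ι :=
  (2 * ‖a‖ ^ 2) • ContinuousLinearMap.id ℝ _ +
    (2 * b) • ∑ j, ((x j ^ 2)⁻¹ • EuclideanSpace.proj j).smulRight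
      (EuclideanSpace.single j (1 : ℝ))

end Definitions

variable {a x y : EuclideanSpace ℝ ι} (b : ℝ)

theorem hasGradientAt_poissonLoss (hy : ⟪a, y⟫ ≠ 0) :
    HasGradientAt (poissonLoss a b) (poissonLossGrad a b y) y := by
  have hφ : HasDerivAt (fun s : ℝ => -(b * Real.log (s ^ 2)) + s ^ 2)
      (2 * ⟪a, y⟫ - 2 * b / ⟪a, y⟫) ⟪a, y⟫ := by
    refine ((((hasDerivAt_pow 2 _).log (pow_ne_zero 2 hy)).const_mul b).neg.add
      (hasDerivAt_pow 2 ⟪a, y⟫)).congr_deriv ?_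
    field_simp
    ring
  exact hφ.hasGradientAt_comp_inner

theorem hasFDerivAt_poissonLossGrad (hx : ⟪a, x⟫ ≠ 0) :
    HasFDerivAt (poissonLossGrad a b) (poissonLossHess a b x) x := by
  have hψ : HasDerivAt (fun s : ℝ => 2 * s - 2 * b / s) (2 + 2 * b / ⟪a, x⟫ ^ 2) ⟪a, x⟫ := by
    refine (((hasDerivAt_id _).const_mul 2).sub
      ((hasDerivAt_inv hx).const_mul (2 * b))).congr_deriv ?_
    field_simp
    ring
  exact (hψ.comp_hasFDerivAt x (innerSL ℝ a).hasFDerivAt).smul_const a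

theorem inner_poissonLossHess (v : EuclideanSpace ℝ ι) :
    ⟪v, poissonLossHess a b x v⟫ = (2 + 2 * b / ⟪a, x⟫ ^ 2) * ⟪a, v⟫ ^ 2 := by
  simp only [poissonLossHess, ContinuousLinearMap.smulRight_apply, smul_apply,
    innerSL_apply_apply, smul_eq_mul, real_inner_smul_right, real_inner_comm a v]
  ring

variable [DecidableEq ι]

theorem hasGradientAt_poissonReference (hy : ∀ j, y j ≠ 0) :
    HasGradientAt (poissonReference a b) (poissonReferenceGrad a b y) y := by
  have hlog : HasFDerivAt (𝕜 := ℝ) (fun z : EuclideanSpace ℝ ι => ∑ j, Real.log (z j))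
      (∑ j, (y j)⁻¹ • EuclideanSpace.proj j) y :=
    HasFDerivAt.fun_sum fun j _ => (EuclideanSpace.hasFDerivAt_apply y j).log (hy j)
  refine (((hasStrictFDerivAt_norm_sq y).hasFDerivAt.const_mul (‖a‖ ^ 2)).sub
    (hlog.const_mul (2 * b))).congr_fderiv ?_
  ext v
  simp only [poissonReferenceGrad, map_sub, map_smul, map_sum, sub_apply, smul_apply, sum_apply,
    InnerProductSpace.toDual_apply_apply, innerSL_apply_apply, EuclideanSpace.inner_single_left,
    PiLp.proj_apply, conj_trivial, nsmul_eq_mul, Nat.cast_ofNat, smul_eq_mul, one_mul]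
  ring

theorem hasFDerivAt_poissonReferenceGrad (hx : ∀ j, x j ≠ 0) :
    HasFDerivAt (poissonReferenceGrad a b) (poissonReferenceHess a b x) x := by
  have hinv : ∀ j, HasFDerivAt (𝕜 := ℝ)
      (fun z : EuclideanSpace ℝ ι => (z j)⁻¹ • EuclideanSpace.single j (1 : ℝ))
      ((-(x j ^ 2)⁻¹ • EuclideanSpace.proj j).smulRight (EuclideanSpace.single j (1 : ℝ))) x :=
    fun j => ((hasDerivAt_inv (hx j)).comp_hasFDerivAt x
      (EuclideanSpace.hasFDerivAt_apply x j)).smul_const _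
  refine (((hasFDerivAt_id x).const_smul (2 * ‖a‖ ^ 2)).sub
    ((HasFDerivAt.fun_sum fun j _ => hinv j).const_smul (2 * b))).congr_fderiv ?_
  ext v i
  simp [poissonReferenceHess]

theorem inner_poissonReferenceHess (v : EuclideanSpace ℝ ι) :
    ⟪v, poissonReferenceHess a b x v⟫ = 2 * ‖a‖ ^ 2 * ‖v‖ ^ 2 + 2 * b * ∑ j, (v j / x j) ^ 2 := by
  simp only [poissonReferenceHess, add_apply, smul_apply, ContinuousLinearMap.id_apply, sum_apply,
    ContinuousLinearMap.smulRight_apply, PiLp.proj_apply, smul_eq_mul, inner_add_right,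
    real_inner_smul_right, real_inner_self_eq_norm_sq, inner_sum, Finset.mul_sum, add_right_inj]
  refine Finset.sum_congr rfl fun j _ => ?_
  simp only [EuclideanSpace.inner_single_right, conj_trivial, one_mul]
  ring

theorem inner_poissonReferenceHess_sub_poissonLossHess_nonneg (ha : ∀ i, 0 ≤ a i) (hb : 0 ≤ b)
    (hx : ∀ i, 0 < x i) (v : EuclideanSpace ℝ ι) :
    0 ≤ ⟪v, (poissonReferenceHess a b x - poissonLossHess a b x) v⟫ := by
  have hcs : ⟪a, v⟫ ^ 2 ≤ ‖a‖ ^ 2 * ‖v‖ ^ 2 := by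
    rw [← mul_pow, ← sq_abs]
    gcongr
    exact abs_real_inner_le_norm a v
  have hweighted : ⟪a, v⟫ ^ 2 / ⟪a, x⟫ ^ 2 ≤ ∑ i, (v i / x i) ^ 2 :=
    div_le_of_le_mul₀ (sq_nonneg _) (Finset.sum_nonneg fun i _ => sq_nonneg _)
      (by rw [mul_comm]; exact sq_inner_le_sq_inner_mul_sum_sq_div ha hx v)
  have hsplit : (2 + 2 * b / ⟪a, x⟫ ^ 2) * ⟪a, v⟫ ^ 2
      = 2 * ⟪a, v⟫ ^ 2 + 2 * (b * (⟪a, v⟫ ^ 2 / ⟪a, x⟫ ^ 2)) := by ring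
  rw [sub_apply, inner_sub_right, inner_poissonReferenceHess, inner_poissonLossHess, hsplit]
  linarith [mul_le_mul_of_nonneg_left hweighted hb]

end Poisson

/-- On the positive orthant, with `f(x) = -b·log(⟨a,x⟩²) + ⟨a,x⟩²` and
`h(x) = ‖a‖²‖x‖² - 2b·∑ⱼ log xⱼ`, the Hessian of `h - f` is positive
semidefinite at every point of the positive orthant, i.e. `f` is `1`-smooth
relative to `h` (`h - f` is convex on the positive orthant). -/
theorem poisson_phase_retrieval_relsmooth {n : ℕ}
    (a : EuclideanSpace ℝ (Fin n)) (ha : ∀ i, 0 ≤ a i) (ha0 : a ≠ 0)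
    (b : ℝ) (hb : 0 < b) :
    (∀ x : EuclideanSpace ℝ (Fin n), (∀ i, 0 < x i) →
      ∀ v : EuclideanSpace ℝ (Fin n),
        0 ≤ (inner ℝ v ((fderiv ℝ (gradient (fun y : EuclideanSpace ℝ (Fin n) =>
          (‖a‖ ^ 2 * ‖y‖ ^ 2 - 2 * b * ∑ j, Real.log (y j)) -
            (-(b * Real.log ((inner ℝ a y : ℝ) ^ 2)) + (inner ℝ a y : ℝ) ^ 2))) x) v) : ℝ)) ∧
    ConvexOn ℝ {x : EuclideanSpace ℝ (Fin n) | ∀ i, 0 < x i}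
      (fun y => (‖a‖ ^ 2 * ‖y‖ ^ 2 - 2 * b * ∑ j, Real.log (y j)) -
        (-(b * Real.log ((inner ℝ a y : ℝ) ^ 2)) + (inner ℝ a y : ℝ) ^ 2)) := by
  have hgrad : ∀ x : EuclideanSpace ℝ (Fin n), (∀ i, 0 < x i) →
      HasGradientAt (fun y => poissonReference a b y - poissonLoss a b y)
        (poissonReferenceGrad a b x - poissonLossGrad a b x) x := fun x hx =>
    (hasGradientAt_poissonReference b fun j => (hx j).ne').sub
      (hasGradientAt_poissonLoss b (inner_pos_of_nonneg_of_pos ha ha0 hx).ne')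
  have hhess : ∀ x : EuclideanSpace ℝ (Fin n), (∀ i, 0 < x i) →
      HasFDerivAt (fun y => poissonReferenceGrad a b y - poissonLossGrad a b y)
        (poissonReferenceHess a b x - poissonLossHess a b x) x := fun x hx =>
    (hasFDerivAt_poissonReferenceGrad b fun j => (hx j).ne').sub
      (hasFDerivAt_poissonLossGrad b (inner_pos_of_nonneg_of_pos ha ha0 hx).ne')
  have hpos := fun (x : EuclideanSpace ℝ (Fin n)) (hx : ∀ i, 0 < x i) =>
    inner_poissonReferenceHess_sub_poissonLossHess_nonneg b ha hb.le hx
  refine ⟨fun x hx v => ?_,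
    convexOn_of_hasGradientAt_of_hasFDerivAt_nonneg convex_setOf_forall_pos hgrad hhess hpos⟩
  have hG : gradient (fun y => poissonReference a b y - poissonLoss a b y)
      =ᶠ[nhds x] fun y => poissonReferenceGrad a b y - poissonLossGrad a b y :=
    Filter.eventually_of_mem (isOpen_setOf_forall_pos.mem_nhds hx) fun y hy =>
      (hgrad y hy).gradient
  change 0 ≤ ⟪v, fderiv ℝ (gradient fun y => poissonReference a b y - poissonLoss a b y) x v⟫
  rw [((hhess x hx).congr_of_eventuallyEq hG).fderiv]
  exact hpos x hx v
end
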